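/- Let Θ be a convex open subset of ℝ^p, μ a measure on ℝ^d, and T : ℝ^d → ℝ^p measurable such that M(θ) := ∫ exp(θᵀ T(z)) μ(dz) < ∞ for all θ ∈ Θ. Then M is infinitely differentiable on Θ with gradient DM(θ) = ∫ T(z) exp(θᵀ T(z)) μ(dz) and Hessian D²M(θ) = ∫ T(z) T(z)ᵀ exp(θᵀ T(z)) μ(dz). If moreover μ({z ∈ ℝ^d : bᵀ T(z) ≠ 0}) > 0 for every b ∈ ℝ^p \ {0}, then the map F := DM : Θ → ℝ^p is injective, its image F(Θ) is open, and the inverse map G := F^{−1} : F(Θ) → Θ is twice continuously differentiable with Jacobian DG(η) = (DF(G(η)))^{−1} = (D²M(G(η)))^{−1}. -/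

import Mathlib

/-!
Pushing `μ` forward along `T` reduces everything to transforms `θ ↦ ∫ exp (θ ⬝ᵥ t) • w t dν(t)` of a
measure `ν` on `ℝ^p` against continuous weights with `‖w t‖ ≤ C ‖t‖ ^ k`; then `M` has weight `1`
and `F` has weight `t`. For `θ` within `r` of `θ₀`, `‖t‖ ^ k exp (θ ⬝ᵥ t)` is dominated by a
multiple of the sum of `exp (v ⬝ᵥ t)` over the vertices `v` of the cube of radius `2 r` around
`θ₀`, so one may differentiate under the integral sign; the derivative is a transform of the same
kind with weight `(b ↦ b ⬝ᵥ t) ⊗ w t`, and induction gives smoothness.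
The quadratic form of `DF(θ)` is `b ↦ ∫ exp (θ ⬝ᵥ t) (b ⬝ᵥ t) ^ 2 dν`, positive definite under the
support condition. Hence `τ ↦ F (x + τ v) ⬝ᵥ v` is strictly increasing, which makes `F` injective
on the convex `Θ`, and `DF(θ)` is invertible, so the inverse function theorem applies on `Θ`.
-/

open MeasureTheory Filter Topology

noncomputable section

/-- `ℝ^p` as a pi type. -/
abbrev Vec (p : ℕ) := Fin p → ℝ

open Matrix Metric

section ExpBounds

variable {ι : Type*} [Fintype ι]

/- Expand `∏ i, ∑ s : SignType, exp ((θ i + r * s) * t i)`: the term `ε = sign ∘ t` is the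
left-hand side. -/
lemma exp_dotProduct_add_le_sum_signs [DecidableEq ι] (θ t : ι → ℝ) (r : ℝ) :
    Real.exp (θ ⬝ᵥ t + r * ∑ i, |t i|) ≤
      ∑ ε : ι → SignType, Real.exp ((θ + r • fun i => (ε i : ℝ)) ⬝ᵥ t) := by
  classical
  have hterm (ε : ι → SignType) :
      Real.exp ((θ + r • fun i => (ε i : ℝ)) ⬝ᵥ t) = ∏ i, Real.exp ((θ i + r * ε i) * t i) := by
    rw [← Real.exp_sum]; rfl
  calc Real.exp (θ ⬝ᵥ t + r * ∑ i, |t i|)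
      = ∏ i, Real.exp ((θ i + r * SignType.sign (t i)) * t i) := by
        rw [← Real.exp_sum, dotProduct, Finset.mul_sum, ← Finset.sum_add_distrib]
        congr 1
        refine Finset.sum_congr rfl fun i _ => ?_
        rw [← sign_mul_self (t i)]
        ring
    _ ≤ ∏ i, ∑ s : SignType, Real.exp ((θ i + r * s) * t i) := by
        gcongr with i
        exact Finset.single_le_sum (f := fun s : SignType => Real.exp ((θ i + r * s) * t i))
          (fun _ _ => (Real.exp_pos _).le) (Finset.mem_univ _)
    _ = _ := by
        rw [Fintype.prod_sum]
        exact Finset.sum_congr rfl fun ε _ => (hterm ε).symm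

lemma norm_pow_mul_exp_dotProduct_le [DecidableEq ι] {θ₀ θ : ι → ℝ} {r : ℝ} (hr : 0 < r)
    (hθ : dist θ θ₀ ≤ r) (k : ℕ) (t : ι → ℝ) :
    ‖t‖ ^ k * Real.exp (θ ⬝ᵥ t) ≤ k.factorial / r ^ k *
      ∑ ε : ι → SignType, Real.exp ((θ₀ + (2 * r) • fun i => (ε i : ℝ)) ⬝ᵥ t) := by
  have hnorm : ‖t‖ ≤ ∑ i, |t i| := by
    refine (pi_norm_le_iff_of_nonneg (by positivity)).2 fun i => ?_
    exact Finset.single_le_sum (f := fun i => |t i|) (fun _ _ => abs_nonneg _) (Finset.mem_univ i)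
  have hshift : θ ⬝ᵥ t ≤ θ₀ ⬝ᵥ t + r * ∑ i, |t i| := by
    rw [← sub_le_iff_le_add', ← sub_dotProduct, dotProduct, Finset.mul_sum]
    refine Finset.sum_le_sum fun i _ => ?_
    calc (θ - θ₀) i * t i ≤ |(θ - θ₀) i| * |t i| := by rw [← abs_mul]; exact le_abs_self _
      _ ≤ r * |t i| := by
        gcongr
        exact (dist_le_pi_dist θ θ₀ i).trans hθ
  have hpow : ‖t‖ ^ k ≤ k.factorial / r ^ k * Real.exp (r * ‖t‖) := by
    have := Real.pow_div_factorial_le_exp (r * ‖t‖) (by positivity) k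
    rw [mul_pow, div_le_iff₀ (by positivity)] at this
    rw [div_mul_eq_mul_div, le_div_iff₀ (by positivity)]
    linarith
  calc ‖t‖ ^ k * Real.exp (θ ⬝ᵥ t)
      ≤ k.factorial / r ^ k * Real.exp (r * ‖t‖) * Real.exp (θ₀ ⬝ᵥ t + r * ∑ i, |t i|) := by
        gcongr
    _ ≤ k.factorial / r ^ k * Real.exp (θ₀ ⬝ᵥ t + 2 * r * ∑ i, |t i|) := by
        rw [mul_assoc, ← Real.exp_add]
        exact mul_le_mul_of_nonneg_left (Real.exp_le_exp.2 (by nlinarith)) (by positivity)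
    _ ≤ _ := by
        gcongr
        exact exp_dotProduct_add_le_sum_signs _ _ _

end ExpBounds

section Laplace

universe u

variable {ι : Type u} [Fintype ι]

variable (ι) in
def dotProductCLM : (ι → ℝ) →L[ℝ] (ι → ℝ) →L[ℝ] ℝ :=
  LinearMap.toContinuousLinearMap
    ((LinearMap.toContinuousLinearMap : ((ι → ℝ) →ₗ[ℝ] ℝ) ≃ₗ[ℝ] _).toLinearMap ∘ₗ
      (dotProductBilin ℝ ℝ).flip)

@[simp]
lemma dotProductCLM_apply (t θ : ι → ℝ) : dotProductCLM ι t θ = θ ⬝ᵥ t := rfl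

def HasPowGrowth {E : Type*} [NormedAddCommGroup E] (k : ℕ) (w : (ι → ℝ) → E) : Prop :=
  Continuous w ∧ ∃ C, 0 ≤ C ∧ ∀ t, ‖w t‖ ≤ C * ‖t‖ ^ k

lemma hasPowGrowth_const {E : Type*} [NormedAddCommGroup E] (x : E) :
    HasPowGrowth 0 fun _ : ι → ℝ => x :=
  ⟨continuous_const, ‖x‖, norm_nonneg x, fun _ => by simp⟩

lemma hasPowGrowth_id : HasPowGrowth 1 fun t : ι → ℝ => t :=
  ⟨continuous_id, 1, zero_le_one, fun _ => by simp⟩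

variable {E : Type*} [NormedAddCommGroup E] [NormedSpace ℝ E] {k : ℕ} {w : (ι → ℝ) → E}

lemma HasPowGrowth.smulRight (hw : HasPowGrowth k w) :
    HasPowGrowth (k + 1) fun t => (dotProductCLM ι t).smulRight (w t) := by
  obtain ⟨hc, C, hC, hwC⟩ := hw
  refine ⟨by fun_prop, ‖dotProductCLM ι‖ * C, by positivity, fun t => ?_⟩
  rw [ContinuousLinearMap.norm_smulRight_apply]
  calc ‖dotProductCLM ι t‖ * ‖w t‖ ≤ (‖dotProductCLM ι‖ * ‖t‖) * (C * ‖t‖ ^ k) := by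
        gcongr
        exacts [(dotProductCLM ι).le_opNorm t, hwC t]
    _ = _ := by ring

lemma HasPowGrowth.norm_exp_dotProduct_smul_le [DecidableEq ι] (hw : HasPowGrowth k w)
    (θ₀ : ι → ℝ) {r : ℝ} (hr : 0 < r) :
    ∃ C, ∀ θ, dist θ θ₀ ≤ r → ∀ t, ‖Real.exp (θ ⬝ᵥ t) • w t‖ ≤
      C * ∑ ε : ι → SignType, Real.exp ((θ₀ + (2 * r) • fun i => (ε i : ℝ)) ⬝ᵥ t) := by
  obtain ⟨-, C, hC, hwC⟩ := hw
  refine ⟨C * (k.factorial / r ^ k), fun θ hθ t => ?_⟩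
  rw [norm_smul, Real.norm_of_nonneg (Real.exp_pos _).le, mul_assoc]
  calc Real.exp (θ ⬝ᵥ t) * ‖w t‖ ≤ C * (‖t‖ ^ k * Real.exp (θ ⬝ᵥ t)) := by
        nlinarith [hwC t, Real.exp_pos (θ ⬝ᵥ t)]
    _ ≤ _ := mul_le_mul_of_nonneg_left (norm_pow_mul_exp_dotProduct_le hr hθ k t) hC

lemma norm_sign_smul_le (ε : ι → SignType) {r : ℝ} (hr : 0 ≤ r) :
    ‖r • fun i => (ε i : ℝ)‖ ≤ r := by
  refine (pi_norm_le_iff_of_nonneg hr).2 fun i => ?_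
  rw [Pi.smul_apply, norm_smul, Real.norm_of_nonneg hr]
  refine mul_le_of_le_one_right hr ?_
  cases ε i <;> simp

variable {ν : Measure (ι → ℝ)} {Θ : Set (ι → ℝ)}

lemma integrable_sum_exp_dotProduct_signs [DecidableEq ι]
    (hint : ∀ θ ∈ Θ, Integrable (fun t => Real.exp (θ ⬝ᵥ t)) ν)
    {θ₀ : ι → ℝ} {r : ℝ} (hr : 0 ≤ r) (hball : closedBall θ₀ r ⊆ Θ) :
    Integrable (fun t => ∑ ε : ι → SignType,
      Real.exp ((θ₀ + r • fun i => (ε i : ℝ)) ⬝ᵥ t)) ν :=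
  integrable_finsetSum _ fun ε _ => hint _ <| hball <| by
    rw [mem_closedBall, dist_eq_norm, add_sub_cancel_left]
    exact norm_sign_smul_le ε hr

variable (ν) in
def laplace (w : (ι → ℝ) → E) (θ : ι → ℝ) : E :=
  ∫ t, Real.exp (θ ⬝ᵥ t) • w t ∂ν

lemma exists_pos_closedBall_two_mul_subset {θ : ι → ℝ} (hΘ : IsOpen Θ) (hθ : θ ∈ Θ) :
    ∃ r, 0 < r ∧ closedBall θ (2 * r) ⊆ Θ := by
  obtain ⟨ε, hε, hεΘ⟩ := nhds_basis_closedBall.mem_iff.1 (hΘ.mem_nhds hθ)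
  exact ⟨ε / 2, by positivity, by rwa [mul_div_cancel₀ _ two_ne_zero]⟩

lemma HasPowGrowth.integrable_exp_dotProduct_smul (hΘ : IsOpen Θ)
    (hint : ∀ θ ∈ Θ, Integrable (fun t => Real.exp (θ ⬝ᵥ t)) ν) (hw : HasPowGrowth k w)
    {θ : ι → ℝ} (hθ : θ ∈ Θ) :
    Integrable (fun t => Real.exp (θ ⬝ᵥ t) • w t) ν := by
  classical
  obtain ⟨r, hr, hball⟩ := exists_pos_closedBall_two_mul_subset hΘ hθ
  obtain ⟨C, hC⟩ := hw.norm_exp_dotProduct_smul_le θ hr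
  refine ((integrable_sum_exp_dotProduct_signs hint (by positivity) hball).const_mul C).mono'
    ?_ (.of_forall (hC θ (by simp [hr.le])))
  have := hw.1
  exact (by fun_prop : Continuous fun t => Real.exp (θ ⬝ᵥ t) • w t).aestronglyMeasurable

lemma hasFDerivAt_exp_dotProduct_smul (θ t : ι → ℝ) (x : E) :
    HasFDerivAt (fun θ => Real.exp (θ ⬝ᵥ t) • x)
      (Real.exp (θ ⬝ᵥ t) • (dotProductCLM ι t).smulRight x) θ := by
  have h := ((dotProductCLM ι t).hasFDerivAt (x := θ)).exp.smul_const x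
  refine h.congr_fderiv ?_
  ext v
  simp [smul_smul]

lemma HasPowGrowth.hasFDerivAt_laplace (hΘ : IsOpen Θ)
    (hint : ∀ θ ∈ Θ, Integrable (fun t => Real.exp (θ ⬝ᵥ t)) ν) (hw : HasPowGrowth k w)
    {θ₀ : ι → ℝ} (hθ₀ : θ₀ ∈ Θ) :
    HasFDerivAt (laplace ν w)
      (laplace ν (fun t => (dotProductCLM ι t).smulRight (w t)) θ₀) θ₀ := by
  classical
  obtain ⟨r, hr, hball⟩ := exists_pos_closedBall_two_mul_subset hΘ hθ₀
  obtain ⟨C, hC⟩ := hw.smulRight.norm_exp_dotProduct_smul_le θ₀ hr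
  have := hw.1
  refine hasFDerivAt_integral_of_dominated_of_fderiv_le (ball_mem_nhds θ₀ hr)
    (.of_forall fun θ => ?_) (hw.integrable_exp_dotProduct_smul hΘ hint hθ₀)
    (hw.smulRight.integrable_exp_dotProduct_smul hΘ hint hθ₀).aestronglyMeasurable
    (.of_forall fun t θ hθ => hC θ (mem_ball.1 hθ).le t)
    ((integrable_sum_exp_dotProduct_signs hint (by positivity) hball).const_mul C)
    (.of_forall fun t θ _ => ?_)
  · exact (by fun_prop : Continuous fun t => Real.exp (θ ⬝ᵥ t) • w t).aestronglyMeasurable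
  · exact hasFDerivAt_exp_dotProduct_smul θ t (w t)

/- `E` lives in the universe of `ι` so that the induction can pass to the weight of the derivative,
valued in `(ι → ℝ) →L[ℝ] E`. -/
lemma HasPowGrowth.contDiffOn_laplace (hΘ : IsOpen Θ)
    (hint : ∀ θ ∈ Θ, Integrable (fun t => Real.exp (θ ⬝ᵥ t)) ν) (n : ℕ) :
    ∀ {E : Type u} [NormedAddCommGroup E] [NormedSpace ℝ E] {k : ℕ} {w : (ι → ℝ) → E},
      HasPowGrowth k w → ContDiffOn ℝ n (laplace ν w) Θ := by
  induction n with
  | zero =>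
    intro E _ _ k w hw
    exact contDiffOn_zero.2 fun θ hθ =>
      (hw.hasFDerivAt_laplace hΘ hint hθ).continuousAt.continuousWithinAt
  | succ n ih =>
    intro E _ _ k w hw
    rw [Nat.cast_succ, contDiffOn_succ_iff_fderiv_of_isOpen hΘ]
    refine ⟨fun θ hθ => (hw.hasFDerivAt_laplace hΘ hint hθ).differentiableAt.differentiableWithinAt,
      by simp, (ih hw.smulRight).congr fun θ hθ => (hw.hasFDerivAt_laplace hΘ hint hθ).fderiv⟩

lemma HasPowGrowth.laplace_smulRight_apply (hΘ : IsOpen Θ)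
    (hint : ∀ θ ∈ Θ, Integrable (fun t => Real.exp (θ ⬝ᵥ t)) ν) (hw : HasPowGrowth k w)
    {θ : ι → ℝ} (hθ : θ ∈ Θ) (v : ι → ℝ) :
    laplace ν (fun t => (dotProductCLM ι t).smulRight (w t)) θ v =
      laplace ν (fun t => (v ⬝ᵥ t) • w t) θ := by
  rw [laplace, ContinuousLinearMap.integral_apply
    (hw.smulRight.integrable_exp_dotProduct_smul hΘ hint hθ)]
  rfl

lemma dotProduct_laplace_smulRight_self_pos (hΘ : IsOpen Θ)
    (hint : ∀ θ ∈ Θ, Integrable (fun t => Real.exp (θ ⬝ᵥ t)) ν) {θ : ι → ℝ} (hθ : θ ∈ Θ)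
    {b : ι → ℝ} (hb : ν {t | b ⬝ᵥ t ≠ 0} ≠ 0) :
    0 < laplace ν (fun t => (dotProductCLM ι t).smulRight t) θ b ⬝ᵥ b := by
  have hf : Integrable (fun t => Real.exp (θ ⬝ᵥ t) • (b ⬝ᵥ t) • t) ν :=
    (hasPowGrowth_id.smulRight.integrable_exp_dotProduct_smul hΘ hint hθ
      ).apply_continuousLinearMap b
  have hquad : ∀ t, dotProductCLM ι b (Real.exp (θ ⬝ᵥ t) • (b ⬝ᵥ t) • t) =
      Real.exp (θ ⬝ᵥ t) * (b ⬝ᵥ t) ^ 2 := fun t => by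
    simp only [dotProductCLM_apply, smul_dotProduct, smul_eq_mul, dotProduct_comm t b]
    ring
  rw [hasPowGrowth_id.laplace_smulRight_apply hΘ hint hθ, laplace, ← dotProductCLM_apply,
    ← (dotProductCLM ι b).integral_comp_comm hf]
  simp only [hquad]
  have hsupp :
      Function.support (fun t => Real.exp (θ ⬝ᵥ t) * (b ⬝ᵥ t) ^ 2) = {t | b ⬝ᵥ t ≠ 0} := by
    ext t
    simp [(Real.exp_pos _).ne']
  rw [integral_pos_iff_support_of_nonneg (fun t => by positivity)
    ((dotProductCLM ι b).integrable_comp hf |>.congr (.of_forall hquad)), hsupp]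
  exact pos_iff_ne_zero.2 hb

end Laplace

section Injectivity

variable {ι : Type*} [Fintype ι]

lemma Convex.injOn_of_hasFDerivAt_of_dotProduct_pos {s : Set (ι → ℝ)} (hs : Convex ℝ s)
    {f : (ι → ℝ) → ι → ℝ} {f' : (ι → ℝ) → (ι → ℝ) →L[ℝ] ι → ℝ}
    (hf : ∀ x ∈ s, HasFDerivAt f (f' x) x) (hpos : ∀ x ∈ s, ∀ v ≠ 0, 0 < f' x v ⬝ᵥ v) :
    Set.InjOn f s := by
  intro x hx y hy hxy
  by_contra hne
  set v := y - x
  have hv : v ≠ 0 := sub_ne_zero.2 (Ne.symm hne)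
  have hseg : ∀ τ ∈ Set.Icc (0 : ℝ) 1, x + τ • v ∈ s := fun τ hτ =>
    hs.add_smul_sub_mem hx hy hτ
  have hderiv : ∀ τ ∈ Set.Icc (0 : ℝ) 1,
      HasDerivAt (fun τ : ℝ => f (x + τ • v) ⬝ᵥ v) (f' (x + τ • v) v ⬝ᵥ v) τ := by
    intro τ hτ
    have hline : HasDerivAt (fun τ : ℝ => x + τ • v) v τ := by
      simpa using ((hasDerivAt_id τ).smul_const v).const_add x
    exact (dotProductCLM ι v).hasFDerivAt.comp_hasDerivAt τ
      ((hf _ (hseg τ hτ)).comp_hasDerivAt τ hline)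
  obtain ⟨τ, hτ, hslope⟩ := exists_hasDerivAt_eq_slope _ _ zero_lt_one
    (fun τ hτ => (hderiv τ hτ).continuousAt.continuousWithinAt)
    (fun τ hτ => hderiv τ (Set.Ioo_subset_Icc_self hτ))
  have hends : f (x + (1 : ℝ) • v) ⬝ᵥ v = f (x + (0 : ℝ) • v) ⬝ᵥ v := by
    simp [v, hxy]
  rw [hends, sub_self, zero_div] at hslope
  exact (hpos _ (hseg τ (Set.Ioo_subset_Icc_self hτ)) v hv).ne' hslope

end Injectivity

section InverseFunction

variable {E F : Type*} [NormedAddCommGroup E] [NormedSpace ℝ E] [CompleteSpace E]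
  [NormedAddCommGroup F] [NormedSpace ℝ F] {f : E → F} {s : Set E} {x : E} {e : E ≃L[ℝ] F}

lemma Set.InjOn.invFunOn_eventuallyEq_localInverse (hinj : Set.InjOn f s) (hs : IsOpen s)
    (hx : x ∈ s) (hf : HasStrictFDerivAt f (e : E →L[ℝ] F) x) :
    Function.invFunOn f s =ᶠ[𝓝 (f x)] hf.localInverse f e x :=
  hf.localInverse_unique <| eventually_of_mem (hs.mem_nhds hx) fun _ hy =>
    hinj.leftInvOn_invFunOn hy

lemma Set.InjOn.hasFDerivAt_invFunOn (hinj : Set.InjOn f s) (hs : IsOpen s) (hx : x ∈ s)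
    (hf : HasStrictFDerivAt f (e : E →L[ℝ] F) x) :
    HasFDerivAt (Function.invFunOn f s) (e.symm : F →L[ℝ] E) (f x) :=
  hf.to_localInverse.hasFDerivAt.congr_of_eventuallyEq
    (hinj.invFunOn_eventuallyEq_localInverse hs hx hf)

lemma Set.InjOn.contDiffAt_invFunOn {n : WithTop ℕ∞} (hinj : Set.InjOn f s) (hs : IsOpen s)
    (hx : x ∈ s) (hf : ContDiffAt ℝ n f x) (hf' : HasFDerivAt f (e : E →L[ℝ] F) x) (hn : n ≠ 0) :
    ContDiffAt ℝ n (Function.invFunOn f s) (f x) :=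
  (hf.to_localInverse hf' hn).congr_of_eventuallyEq
    (hinj.invFunOn_eventuallyEq_localInverse hs hx (hf.hasStrictFDerivAt' hf' hn))

lemma Set.InjOn.isOpen_image_and_exists_inverse {n : WithTop ℕ∞} (hinj : Set.InjOn f s)
    (hs : IsOpen s) (hf : ContDiffOn ℝ n f s) (hn : n ≠ 0)
    (hf' : ∀ x ∈ s, ∃ e : E ≃L[ℝ] F, HasFDerivAt f (e : E →L[ℝ] F) x) :
    IsOpen (f '' s) ∧ ∃ g : F → E,
      (∀ x ∈ s, g (f x) = x) ∧
      (∀ y ∈ f '' s, g y ∈ s ∧ f (g y) = y) ∧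
      ContDiffOn ℝ n g (f '' s) ∧
      ∀ y ∈ f '' s, ∃ L : F →L[ℝ] E,
        HasFDerivAt g L y ∧
        L.comp (fderiv ℝ f (g y)) = ContinuousLinearMap.id ℝ E ∧
        (fderiv ℝ f (g y)).comp L = ContinuousLinearMap.id ℝ F := by
  have hstrict : ∀ x ∈ s, ∃ e : E ≃L[ℝ] F, HasStrictFDerivAt f (e : E →L[ℝ] F) x := by
    intro x hx
    obtain ⟨e, he⟩ := hf' x hx
    exact ⟨e, (hf.contDiffAt (hs.mem_nhds hx)).hasStrictFDerivAt' he hn⟩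
  have hleft : ∀ x ∈ s, Function.invFunOn f s (f x) = x := fun x hx => hinj.leftInvOn_invFunOn hx
  refine ⟨?_, Function.invFunOn f s, hleft, ?_, ?_, ?_⟩
  · refine isOpen_iff_mem_nhds.2 ?_
    rintro _ ⟨x, hx, rfl⟩
    obtain ⟨e, he⟩ := hstrict x hx
    exact he.map_nhds_eq_of_equiv ▸ image_mem_map (hs.mem_nhds hx)
  · rintro _ ⟨x, hx, rfl⟩
    exact ⟨(hleft x hx).symm ▸ hx, by rw [hleft x hx]⟩
  · rintro _ ⟨x, hx, rfl⟩
    obtain ⟨e, he⟩ := hf' x hx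
    exact (hinj.contDiffAt_invFunOn hs hx (hf.contDiffAt (hs.mem_nhds hx)) he hn
      ).contDiffWithinAt
  · rintro _ ⟨x, hx, rfl⟩
    obtain ⟨e, he⟩ := hstrict x hx
    rw [hleft x hx, he.hasFDerivAt.fderiv]
    exact ⟨e.symm, hinj.hasFDerivAt_invFunOn hs hx he, e.coe_symm_comp_coe, e.coe_comp_coe_symm⟩

end InverseFunction

lemma exists_continuousLinearEquiv_of_dotProduct_pos {ι : Type*} [Fintype ι]
    {A : (ι → ℝ) →L[ℝ] ι → ℝ} (hA : ∀ v ≠ 0, 0 < A v ⬝ᵥ v) :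
    ∃ e : (ι → ℝ) ≃L[ℝ] ι → ℝ, (e : (ι → ℝ) →L[ℝ] ι → ℝ) = A := by
  have hinj : Function.Injective A := (injective_iff_map_eq_zero A).2 fun v hv => by
    by_contra hne
    simpa [hv] using hA v hne
  exact ⟨(LinearEquiv.ofInjectiveEndo A.toLinearMap hinj).toContinuousLinearEquiv, rfl⟩

section PushForward

variable {α ι E : Type*} [MeasurableSpace α] [Fintype ι] [NormedAddCommGroup E]
  [NormedSpace ℝ E] {μ : Measure α} {T : α → ι → ℝ}

lemma laplace_map (hT : AEMeasurable T μ) {w : (ι → ℝ) → E} (hw : Continuous w) (θ : ι → ℝ) :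
    laplace (μ.map T) w θ = ∫ z, Real.exp (θ ⬝ᵥ T z) • w (T z) ∂μ :=
  integral_map hT (by fun_prop : Continuous fun t => Real.exp (θ ⬝ᵥ t) • w t).aestronglyMeasurable

lemma integrable_exp_dotProduct_map_iff (hT : AEMeasurable T μ) (θ : ι → ℝ) :
    Integrable (fun t => Real.exp (θ ⬝ᵥ t)) (μ.map T) ↔
      Integrable (fun z => Real.exp (θ ⬝ᵥ T z)) μ :=
  integrable_map_measure
    (by fun_prop : Continuous fun t => Real.exp (θ ⬝ᵥ t)).aestronglyMeasurable hT

end PushForward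

/-- smoothness of the moment generating function `M(θ) = ∫ e^{θᵀT(z)} μ(dz)`
on a convex open set `Θ`, formulas for its gradient `F = DM` and Hessian, and - when
`μ(bᵀT ≠ 0) > 0` for all `b ≠ 0` - injectivity of `F`, openness of `F(Θ)`, and
`C²`-smoothness of `G = F⁻¹` with `DG(η) = (DF(G(η)))⁻¹`. -/
theorem statement17 {p d : ℕ}
    (Θ : Set (Vec p)) (hconv : Convex ℝ Θ) (hopen : IsOpen Θ)
    (μ : Measure (Vec d)) (T : Vec d → Vec p) (hT : Measurable T)
    (M : Vec p → ℝ) (hM : ∀ θ, M θ = ∫ z, Real.exp (∑ i, θ i * T z i) ∂μ)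
    (hfin : ∀ θ ∈ Θ, Integrable (fun z => Real.exp (∑ i, θ i * T z i)) μ)
    (F : Vec p → Vec p)
    (hF : ∀ θ, F θ = ∫ z, Real.exp (∑ i, θ i * T z i) • T z ∂μ) :
    -- M is infinitely differentiable on Θ
    (ContDiffOn ℝ (⊤ : ℕ∞) M Θ) ∧
    -- gradient formula: DM(θ) = ∫ T(z) e^{θᵀT(z)} μ(dz) = F(θ)
    (∀ θ ∈ Θ, ∀ v : Vec p,
      fderiv ℝ M θ v = ∫ z, (∑ i, v i * T z i) * Real.exp (∑ i, θ i * T z i) ∂μ) ∧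
    -- Hessian formula: D²M(θ) = ∫ T(z)T(z)ᵀ e^{θᵀT(z)} μ(dz)
    (∀ θ ∈ Θ, ∀ w : Vec p,
      fderiv ℝ F θ w =
        ∫ z, ((∑ i, w i * T z i) * Real.exp (∑ i, θ i * T z i)) • T z ∂μ) ∧
    -- if μ(bᵀT ≠ 0) > 0 for all b ≠ 0, then:
    ((∀ b : Vec p, b ≠ 0 → μ {z | (∑ i, b i * T z i) ≠ 0} ≠ 0) →
      Set.InjOn F Θ ∧ IsOpen (F '' Θ) ∧
      ∃ G : Vec p → Vec p,
        (∀ θ ∈ Θ, G (F θ) = θ) ∧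
        (∀ η ∈ F '' Θ, G η ∈ Θ ∧ F (G η) = η) ∧
        ContDiffOn ℝ (2 : ℕ∞) G (F '' Θ) ∧
        ∀ η ∈ F '' Θ, ∃ L : Vec p →L[ℝ] Vec p,
          HasFDerivAt G L η ∧
          L.comp (fderiv ℝ F (G η)) = ContinuousLinearMap.id ℝ (Vec p) ∧
          (fderiv ℝ F (G η)).comp L = ContinuousLinearMap.id ℝ (Vec p)) := by
  set ν := μ.map T
  have hint : ∀ θ ∈ Θ, Integrable (fun t => Real.exp (θ ⬝ᵥ t)) ν := fun θ hθ =>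
    (integrable_exp_dotProduct_map_iff hT.aemeasurable θ).2 (hfin θ hθ)
  have hMν : M = laplace ν fun _ => (1 : ℝ) := funext fun θ => by
    rw [hM, laplace_map hT.aemeasurable continuous_const]
    simp [dotProduct]
  have hFν : F = laplace ν fun t => t := funext fun θ => by
    rw [hF, laplace_map hT.aemeasurable continuous_id']
    rfl
  have hDF := fun θ (hθ : θ ∈ Θ) => hasPowGrowth_id.hasFDerivAt_laplace hopen hint hθ
  have hFsmooth : ContDiffOn ℝ (⊤ : ℕ∞) F Θ :=
    hFν ▸ contDiffOn_infty.2 fun n => hasPowGrowth_id.contDiffOn_laplace hopen hint n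
  refine ⟨?_, fun θ hθ v => ?_, fun θ hθ w => ?_, fun hμ => ?_⟩
  · exact hMν ▸ contDiffOn_infty.2 fun n => (hasPowGrowth_const 1).contDiffOn_laplace hopen hint n
  · rw [hMν, ((hasPowGrowth_const 1).hasFDerivAt_laplace hopen hint hθ).fderiv,
      (hasPowGrowth_const 1).laplace_smulRight_apply hopen hint hθ,
      laplace_map hT.aemeasurable (by fun_prop)]
    simp [dotProduct, mul_comm]
  · rw [hFν, (hDF θ hθ).fderiv, hasPowGrowth_id.laplace_smulRight_apply hopen hint hθ,
      laplace_map hT.aemeasurable (by fun_prop)]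
    simp [dotProduct, smul_smul, mul_comm]
  · have hpos (θ) (hθ : θ ∈ Θ) (b : Vec p) (hb : b ≠ 0) :
        0 < laplace ν (fun t => (dotProductCLM _ t).smulRight t) θ b ⬝ᵥ b :=
      dotProduct_laplace_smulRight_self_pos hopen hint hθ fun h =>
        hμ b hb <| nonpos_iff_eq_zero.1 <| h ▸ Measure.le_map_apply hT.aemeasurable _
    have hinj : Set.InjOn F Θ := hconv.injOn_of_hasFDerivAt_of_dotProduct_pos (hFν ▸ hDF) hpos
    refine ⟨hinj, hinj.isOpen_image_and_exists_inverse hopen (hFsmooth.of_le (by norm_cast))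
      two_ne_zero fun θ hθ => ?_⟩
    obtain ⟨e, he⟩ := exists_continuousLinearEquiv_of_dotProduct_pos (hpos θ hθ)
    exact ⟨e, he ▸ hFν ▸ hDF θ hθ⟩
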